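/- arXiv:1505.05622 — 9 statements merged into one kernel-verified Lean document; each statement's English description precedes it below -/
import Mathlib

section
/- Let H_1, …, H_k be groups (k ≥ 1) and let G = H_1 × ⋯ × H_k be their direct product, with π_j : G → H_j the j-th projection. Fix j ∈ {1, …, k} and let M_j and N_j be normal subgroups of H_j. Let M be the subgroup of G consisting of all tuples whose i-th entry is trivial for i ≠ j and whose j-th entry lies in M_j, and let N be the subgroup of G consisting of all tuples whose j-th entry lies in N_j. Then for each f ∈ Aut_N^M(G), the map α_f : H_j → H_j defined by α_f(h) = π_j(f(ι_j(h))), where ι_j(h) is the tuple with j-th entry h and all other entries trivial, is an automorphism of H_j and belongs to Aut_{N_j}^{M_j}(H_j). -/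
/-- `Aut^M(G)`: automorphisms `f` of `G` with `g⁻¹ * f g ∈ M` for all `g`. -/
def autM {G : Type*} [Group G] (M : Subgroup G) : Subgroup (MulAut G) where
  carrier := {f | ∀ g : G, g⁻¹ * f g ∈ M}
  one_mem' := by intro g; simpa using M.one_mem
  mul_mem' := by
    intro f₁ f₂ h₁ h₂ g
    have key : g⁻¹ * (f₁ * f₂) g = (g⁻¹ * f₂ g) * ((f₂ g)⁻¹ * f₁ (f₂ g)) := by
      rw [MulAut.mul_apply]; group
    rw [key]; exact M.mul_mem (h₂ g) (h₁ (f₂ g))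
  inv_mem' := by
    intro f hf g
    have h := M.inv_mem (hf (f⁻¹ g))
    simpa [MulAut.apply_inv_self, mul_inv_rev] using h

/-- `Aut_N(G)`: automorphisms of `G` fixing `N` elementwise. -/
def autN {G : Type*} [Group G] (N : Subgroup G) : Subgroup (MulAut G) where
  carrier := {f | ∀ n ∈ N, f n = n}
  one_mem' := fun n _ => rfl
  mul_mem' := by
    intro f₁ f₂ h₁ h₂ n hn
    rw [MulAut.mul_apply, h₂ n hn, h₁ n hn]
  inv_mem' := by
    intro f hf n hn
    exact f.injective (by rw [MulAut.apply_inv_self]; exact (hf n hn).symm)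

/-- `Aut_N^M(G) = Aut^M(G) ∩ Aut_N(G)`. -/
def autMN {G : Type*} [Group G] (M N : Subgroup G) : Subgroup (MulAut G) :=
  autM M ⊓ autN N

/-! An automorphism `f` of `G` with `g⁻¹ * f g ∈ ι(M)` for all `g` maps the retract `ι(H)` onto
itself, so `π ∘ f ∘ ι` is an automorphism of `H`; the defining conditions of `Aut^{ι(M)}` and
`Aut_{π⁻¹(N)}` transport along `ι` and `π` to those of `Aut^M` and `Aut_N`. -/

variable {G H : Type*} [Group G] [Group H]

lemma autM.apply_mem_of_le {M K : Subgroup G} (hMK : M ≤ K) {f : MulAut G} (hf : f ∈ autM M)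
    {g : G} (hg : g ∈ K) : f g ∈ K := by
  simpa only [mul_inv_cancel_left] using K.mul_mem hg (hMK (hf g))

section Retraction

variable (ι : H →* G) (π : G →* H)

lemma apply_retraction_of_mem_range (hπι : ∀ h, π (ι h) = h) {x : G} (hx : x ∈ ι.range) :
    ι (π x) = x := by
  obtain ⟨h, rfl⟩ := hx
  rw [hπι]

lemma retraction_autM_apply (hπι : ∀ h, π (ι h) = h) {M : Subgroup H} {f : MulAut G}
    (hf : f ∈ autM (M.map ι)) (h : H) :
    ι (π (f (ι h))) = f (ι h) :=
  apply_retraction_of_mem_range ι π hπι <|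
    autM.apply_mem_of_le (Subgroup.map_le_range ι M) hf ⟨h, rfl⟩

def inducedAut (hπι : ∀ h, π (ι h) = h) {M : Subgroup H} (f : MulAut G)
    (hf : f ∈ autM (M.map ι)) : MulAut H where
  toFun h := π (f (ι h))
  invFun h := π (f⁻¹ (ι h))
  left_inv h := by
    simp only [retraction_autM_apply ι π hπι hf, MulAut.inv_apply_self, hπι]
  right_inv h := by
    simp only [retraction_autM_apply ι π hπι ((autM _).inv_mem hf), MulAut.apply_inv_self, hπι]
  map_mul' a b := by simp only [map_mul]

lemma inducedAut_apply (hπι : ∀ h, π (ι h) = h) {M : Subgroup H} {f : MulAut G}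
    (hf : f ∈ autM (M.map ι)) (h : H) :
    inducedAut ι π hπι f hf h = π (f (ι h)) :=
  rfl

lemma inducedAut_mem_autM (hπι : ∀ h, π (ι h) = h) {M : Subgroup H} {f : MulAut G}
    (hf : f ∈ autM (M.map ι)) :
    inducedAut ι π hπι f hf ∈ autM M := by
  intro h
  obtain ⟨m, hm, hιm⟩ := hf (ι h)
  have : π (ι m) = π ((ι h)⁻¹ * f (ι h)) := congrArg π hιm
  rw [map_mul, map_inv, hπι, hπι, ← inducedAut_apply ι π hπι hf] at this
  exact this ▸ hm

lemma inducedAut_mem_autN (hπι : ∀ h, π (ι h) = h) {M N : Subgroup H} {f : MulAut G}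
    (hf : f ∈ autM (M.map ι)) (hfN : f ∈ autN (N.comap π)) :
    inducedAut ι π hπι f hf ∈ autN N := by
  intro n hn
  have hιn : ι n ∈ N.comap π := by rwa [Subgroup.mem_comap, hπι]
  rw [inducedAut_apply, hfN _ hιn, hπι]

end Retraction

theorem statement0_general {k : ℕ} (H : Fin k → Type u) [∀ i, Group (H i)]
    (j : Fin k) (Mj Nj : Subgroup (H j))
    (f : MulAut (∀ i, H i))
    (hf : f ∈ autMN (Mj.map (MonoidHom.mulSingle H j))
            (Nj.comap (Pi.evalMonoidHom H j))) :
    ∃ α : MulAut (H j),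
      (∀ h : H j, α h = f (Pi.mulSingle j h) j) ∧ α ∈ autMN Mj Nj := by
  have hπι : ∀ h, Pi.evalMonoidHom H j (MonoidHom.mulSingle H j h) = h :=
    Pi.mulSingle_eq_same j
  exact ⟨inducedAut _ _ hπι f hf.1, fun _ => rfl, inducedAut_mem_autM _ _ hπι hf.1,
    inducedAut_mem_autN _ _ hπι hf.1 hf.2⟩

/-- for `G = H₁ × ⋯ × H_k`, normal subgroups `M_j, N_j ≤ H_j`,
`M = 1 × ⋯ × M_j × ⋯ × 1`, `N = H₁ × ⋯ × N_j × ⋯ × H_k`, each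
`f ∈ Aut_N^M(G)` induces `α_f ∈ Aut_{N_j}^{M_j}(H_j)`, `α_f h = π_j (f (ι_j h))`. -/
theorem statement0 {k : ℕ} (hk : 1 ≤ k) (H : Fin k → Type u) [∀ i, Group (H i)]
    (j : Fin k) (Mj Nj : Subgroup (H j)) [Mj.Normal] [Nj.Normal]
    (f : MulAut (∀ i, H i))
    (hf : f ∈ autMN (Mj.map (MonoidHom.mulSingle H j))
            (Nj.comap (Pi.evalMonoidHom H j))) :
    ∃ α : MulAut (H j),
      (∀ h : H j, α h = f (Pi.mulSingle j h) j) ∧ α ∈ autMN Mj Nj :=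
  statement0_general H j Mj Nj f hf
end

section
/- Let H_1, …, H_k be groups (k ≥ 1) and let G = H_1 × ⋯ × H_k be their direct product, with π_j : G → H_j the j-th projection. Fix j ∈ {1, …, k} and let M_j and N_j be normal subgroups of H_j. Let M be the subgroup of G consisting of all tuples whose i-th entry is trivial for i ≠ j and whose j-th entry lies in M_j, and let N be the subgroup of G consisting of all tuples whose j-th entry lies in N_j. Then the map φ : Aut_N^M(G) → Aut_{N_j}^{M_j}(H_j) defined by φ(f) = α_f, where α_f(h) = π_j(f(ι_j(h))) and ι_j(h) is the tuple with j-th entry h and all other entries trivial, is a group isomorphism. -/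
/-! The `M`-condition forces an automorphism `f ∈ Aut_N^M(G)` to act trivially on every factor
`H_i` with `i ≠ j`, and the `N`-condition (with `1 ∈ N_j`) forces it to fix every tuple with
trivial `j`-th entry; together these say that `f = α × id` for the automorphism
`α = α_f` of `H_j`. Conversely `α × id` lies in `Aut_N^M(G)` exactly when
`α ∈ Aut_{N_j}^{M_j}(H_j)`. So `Aut_N^M(G)` is the image of `Aut_{N_j}^{M_j}(H_j)` under the
injective homomorphism `α ↦ α × id`, and `f ↦ α_f` is the inverse isomorphism. -/

namespace MulAut

variable {ι : Type*} {H : ι → Type*} [∀ i, Group (H i)]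

def piCongrRightHom : (∀ i, MulAut (H i)) →* MulAut (∀ i, H i) where
  toFun := MulEquiv.piCongrRight
  map_one' := rfl
  map_mul' _ _ := rfl

@[simp]
lemma piCongrRightHom_apply (e : ∀ i, MulAut (H i)) (g : ∀ i, H i) (i : ι) :
    piCongrRightHom e g i = e i (g i) :=
  rfl

variable [DecidableEq ι]

def piMulSingle (j : ι) : MulAut (H j) →* MulAut (∀ i, H i) :=
  piCongrRightHom.comp (MonoidHom.mulSingle (fun i => MulAut (H i)) j)

variable {j : ι}

@[simp]
lemma piMulSingle_apply_self (α : MulAut (H j)) (g : ∀ i, H i) :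
    piMulSingle j α g j = α (g j) := by
  simp [piMulSingle]

lemma piMulSingle_apply_of_ne (α : MulAut (H j)) (g : ∀ i, H i) {i : ι} (hi : i ≠ j) :
    piMulSingle j α g i = g i := by
  simp [piMulSingle, Pi.mulSingle_eq_of_ne hi]

lemma piMulSingle_injective : Function.Injective (piMulSingle (H := H) j) := by
  intro α β h
  ext x
  simpa using congr_fun (DFunLike.congr_fun h (Pi.mulSingle j x)) j

end MulAut

section

variable {ι : Type*} [DecidableEq ι] {H : ι → Type*} [∀ i, Group (H i)] {j : ι}

open MulAut

lemma piMulSingle_mem_autM_iff {M : Subgroup (H j)} {α : MulAut (H j)} :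
    piMulSingle j α ∈ autM (M.map (MonoidHom.mulSingle H j)) ↔ α ∈ autM M := by
  constructor
  · intro h x
    obtain ⟨m, hm, hmx⟩ := h (Pi.mulSingle j x)
    have hm_eq : m = x⁻¹ * α x := by simpa using congr_fun hmx j
    rwa [← hm_eq]
  · intro h g
    refine ⟨(g j)⁻¹ * α (g j), h (g j), funext fun i => ?_⟩
    rcases eq_or_ne i j with rfl | hi
    · simp
    · simp [Pi.mulSingle_eq_of_ne hi, piMulSingle_apply_of_ne _ _ hi]

lemma piMulSingle_mem_autN_iff {N : Subgroup (H j)} {α : MulAut (H j)} :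
    piMulSingle j α ∈ autN (N.comap (Pi.evalMonoidHom H j)) ↔ α ∈ autN N := by
  constructor
  · intro h n hn
    simpa using congr_fun (h (Pi.mulSingle j n) (by simpa using hn)) j
  · intro h g hg
    funext i
    rcases eq_or_ne i j with rfl | hi
    · exact (piMulSingle_apply_self _ _).trans (h _ hg)
    · exact piMulSingle_apply_of_ne _ _ hi

lemma piMulSingle_mem_autMN_iff {M N : Subgroup (H j)} {α : MulAut (H j)} :
    piMulSingle j α ∈
        autMN (M.map (MonoidHom.mulSingle H j)) (N.comap (Pi.evalMonoidHom H j)) ↔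
      α ∈ autMN M N :=
  and_congr piMulSingle_mem_autM_iff piMulSingle_mem_autN_iff

lemma apply_of_ne_of_mem_autM {M : Subgroup (H j)} {f : MulAut (∀ i, H i)}
    (hf : f ∈ autM (M.map (MonoidHom.mulSingle H j))) (g : ∀ i, H i) {i : ι} (hi : i ≠ j) :
    f g i = g i := by
  obtain ⟨m, _, hm⟩ := hf g
  have hm_i : 1 = (g i)⁻¹ * f g i := by simpa [Pi.mulSingle_eq_of_ne hi] using congr_fun hm i
  exact (inv_mul_eq_one.mp hm_i.symm).symm

lemma apply_self_of_mem_autN {N : Subgroup (H j)} {f : MulAut (∀ i, H i)}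
    (hf : f ∈ autN (N.comap (Pi.evalMonoidHom H j))) (g : ∀ i, H i) :
    f g j = f (Pi.mulSingle j (g j)) j := by
  set s := Pi.mulSingle j (g j)
  have hfix : f (g * s⁻¹) = g * s⁻¹ := hf _ (by simp [s, one_mem])
  calc f g j = f (g * s⁻¹ * s) j := by rw [inv_mul_cancel_right]
    _ = (g * s⁻¹ * f s) j := by rw [map_mul, hfix]
    _ = f s j := by simp [s]

lemma mem_range_piMulSingle_of_mem_autMN {M N : Subgroup (H j)} {f : MulAut (∀ i, H i)}
    (hf : f ∈ autMN (M.map (MonoidHom.mulSingle H j)) (N.comap (Pi.evalMonoidHom H j))) :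
    f ∈ (piMulSingle j).range := by
  let r (f : MulAut (∀ i, H i)) : H j →* H j :=
    (Pi.evalMonoidHom H j).comp (f.toMonoidHom.comp (MonoidHom.mulSingle H j))
  have r_apply (f : MulAut (∀ i, H i)) (x : H j) : r f x = f (Pi.mulSingle j x) j := rfl
  have r_inv (f) (hf : f ∈ autN (N.comap (Pi.evalMonoidHom H j))) :
      (r f).comp (r f⁻¹) = .id _ := by
    ext x
    simp only [MonoidHom.comp_apply, r_apply, MonoidHom.id_apply]
    rw [← apply_self_of_mem_autN hf, MulAut.apply_inv_self, Pi.mulSingle_eq_same]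
  refine ⟨(r f).toMulEquiv (r f⁻¹) ?_ ?_, ?_⟩
  · simpa using r_inv f⁻¹ (inv_mem hf.2)
  · exact r_inv f hf.2
  · ext g i
    rcases eq_or_ne i j with rfl | hi
    · simp [r_apply, ← apply_self_of_mem_autN hf.2]
    · rw [piMulSingle_apply_of_ne _ _ hi, apply_of_ne_of_mem_autM hf.1 g hi]

lemma autMN_map_piMulSingle (M N : Subgroup (H j)) :
    (autMN M N).map (piMulSingle j) =
      autMN (M.map (MonoidHom.mulSingle H j)) (N.comap (Pi.evalMonoidHom H j)) := by
  ext f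
  constructor
  · rintro ⟨α, hα, rfl⟩
    exact piMulSingle_mem_autMN_iff.mpr hα
  · intro hf
    obtain ⟨α, rfl⟩ := mem_range_piMulSingle_of_mem_autMN hf
    exact ⟨α, piMulSingle_mem_autMN_iff.mp hf, rfl⟩

end

theorem statement1_general {k : ℕ} (H : Fin k → Type u) [∀ i, Group (H i)]
    (j : Fin k) (Mj Nj : Subgroup (H j)) :
    ∃ φ : (autMN (Mj.map (MonoidHom.mulSingle H j))
            (Nj.comap (Pi.evalMonoidHom H j))) ≃* (autMN Mj Nj),
      ∀ (f : autMN (Mj.map (MonoidHom.mulSingle H j))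
              (Nj.comap (Pi.evalMonoidHom H j))) (h : H j),
        (φ f : MulAut (H j)) h = (f : MulAut (∀ i, H i)) (Pi.mulSingle j h) j := by
  let e := ((autMN Mj Nj).equivMapOfInjective _ MulAut.piMulSingle_injective).trans
    (MulEquiv.subgroupCongr (autMN_map_piMulSingle Mj Nj))
  refine ⟨e.symm, fun f h => ?_⟩
  obtain ⟨α, rfl⟩ := e.surjective f
  simp [e, MulEquiv.subgroupCongr_apply, Subgroup.coe_equivMapOfInjective_apply]

/-- with the setup of Statement 0, `f ↦ α_f` is a group isomorphism
`Aut_N^M(G) ≅ Aut_{N_j}^{M_j}(H_j)`. -/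
theorem statement1 {k : ℕ} (hk : 1 ≤ k) (H : Fin k → Type u) [∀ i, Group (H i)]
    (j : Fin k) (Mj Nj : Subgroup (H j)) [Mj.Normal] [Nj.Normal] :
    ∃ φ : (autMN (Mj.map (MonoidHom.mulSingle H j))
            (Nj.comap (Pi.evalMonoidHom H j))) ≃* (autMN Mj Nj),
      ∀ (f : autMN (Mj.map (MonoidHom.mulSingle H j))
              (Nj.comap (Pi.evalMonoidHom H j))) (h : H j),
        (φ f : MulAut (H j)) h = (f : MulAut (∀ i, H i)) (Pi.mulSingle j h) j :=
  statement1_general H j Mj Nj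
end

section
/- Let G = H × A be a group, where H is a purely non-abelian group and A is a non-trivial abelian group. Then, for every n ≥ 2, there exists a group isomorphism φ : Aut_{Z(G)}^{γ_n(G)}(G) → Aut_{Z(H)}^{γ_n(H)}(H) such that φ maps Aut_c^{n-1}(G) onto Aut_c^{n-1}(H). -/
/-- `Aut_c^m(G)`: `m`-th class preserving automorphisms, conjugation by
elements of `γ_m(G) = lowerCentralSeries G (m-1)`. -/
def autC (G : Type*) [Group G] (m : ℕ) : Subgroup (MulAut G) where
  carrier := {f | ∀ g : G, ∃ x ∈ (⊤ : Subgroup G).lowerCentralSeries (m - 1), f g = x⁻¹ * g * x}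
  one_mem' := fun g => ⟨1, Subgroup.one_mem _, by simp⟩
  mul_mem' := by
    intro f₁ f₂ h₁ h₂ g
    obtain ⟨x, hx, hx2⟩ := h₂ g
    obtain ⟨y, hy, hy2⟩ := h₁ (x⁻¹ * g * x)
    exact ⟨x * y, Subgroup.mul_mem _ hx hy, by rw [MulAut.mul_apply, hx2, hy2]; group⟩
  inv_mem' := by
    intro f hf g
    obtain ⟨x, hx, hx2⟩ := hf (f⁻¹ g)
    refine ⟨x⁻¹, Subgroup.inv_mem _ hx, ?_⟩
    rw [MulAut.apply_inv_self] at hx2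
    rw [inv_inv]
    conv_rhs => rw [hx2]
    group

/-- A group is purely non-abelian if it has no non-trivial abelian direct factor. -/
def PurelyNonabelian (H : Type u) [Group H] : Prop :=
  ¬ ∃ (K B : Type u) (_ : Group K) (_ : CommGroup B),
      Nontrivial B ∧ Nonempty (H ≃* K × B)

/-!
For abelian `A` and `k ≥ 1` we have `γ_{k+1}(H × A) = γ_{k+1}(H) × 1` and `Z(H × A) = Z(H) × A`.
Hence an automorphism `f ∈ Aut_{Z}^{γ_{k+1}}(H × A)` preserves the `A`-coordinate and fixes `A`
pointwise, so `f = t × id_A` with `t ∈ Aut_{Z(H)}^{γ_{k+1}(H)}(H)`; conversely every such `t`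
gives such an `f`. Since `γ_m(H × A) = γ_m(H) × γ_m(A)`, `t × id_A` is conjugation by elements of
`γ_m` exactly when `t` is (conjugate by `(y, 1)`).
-/

open Subgroup

namespace MulAut

variable {H A : Type*} [Group H] [Group A]

def prodLeft : MulAut H →* MulAut (H × A) where
  toFun t := t.prodCongr (MulEquiv.refl A)
  map_one' := rfl
  map_mul' _ _ := rfl

@[simp]
theorem prodLeft_apply (t : MulAut H) (g : H × A) : prodLeft t g = (t g.1, g.2) :=
  rfl

theorem prodLeft_injective : Function.Injective (prodLeft : MulAut H →* MulAut (H × A)) :=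
  fun _ _ htu => MulEquiv.ext fun h => congrArg Prod.fst (DFunLike.congr_fun htu (h, 1))

theorem exists_prodLeft_eq (f : MulAut (H × A)) (hfst : ∀ h, (f (h, 1)).2 = 1)
    (hsnd : ∀ a, f (1, a) = (1, a)) : ∃ t : MulAut H, prodLeft t = f := by
  have hf : ∀ h a, f (h, a) = ((f (h, 1)).1, a) := fun h a => by
    rw [← mul_one h, ← one_mul a, ← Prod.mk_mul_mk, map_mul, hsnd, mul_one, one_mul]
    ext <;> simp [hfst]
  let t₀ : H →* H := (MonoidHom.fst H A).comp ((f : H × A →* H × A).comp (MonoidHom.inl H A))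
  have ht₀ : Function.Bijective t₀ := by
    refine ⟨fun x y hxy => ?_, fun y => ?_⟩
    · have : f (x, 1) = f (y, 1) := by rw [hf x, hf y]; exact congrArg (·, (1 : A)) hxy
      exact congrArg Prod.fst (f.injective this)
    · obtain ⟨p, hp⟩ := f.surjective (y, 1)
      exact ⟨p.1, congrArg Prod.fst ((hf p.1 p.2).symm.trans hp)⟩
  exact ⟨MulEquiv.ofBijective t₀ ht₀, MulEquiv.ext fun g => (hf g.1 g.2).symm⟩

variable {M N : Subgroup H} {K : Subgroup A} {t : MulAut H}

theorem prodLeft_mem_autM_iff : prodLeft t ∈ autM (M.prod K) ↔ t ∈ autM M :=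
  ⟨fun ht h => by simpa using (mem_prod.mp (ht (h, 1))).1,
   fun ht g => mem_prod.mpr ⟨ht g.1, by simp⟩⟩

theorem prodLeft_mem_autN_iff : prodLeft t ∈ autN (N.prod K) ↔ t ∈ autN N :=
  ⟨fun ht h hh => congrArg Prod.fst (ht (h, 1) (mem_prod.mpr ⟨hh, K.one_mem⟩)),
   fun ht z hz => Prod.ext (ht z.1 (mem_prod.mp hz).1) rfl⟩

theorem prodLeft_mem_autC_iff {m : ℕ} : prodLeft t ∈ autC (H × A) m ↔ t ∈ autC H m := by
  refine ⟨fun ht h => ?_, fun ht g => ?_⟩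
  · obtain ⟨x, hx, hxh⟩ := ht (h, 1)
    rw [top_lowerCentralSeries_prod] at hx
    exact ⟨x.1, (mem_prod.mp hx).1, congrArg Prod.fst hxh⟩
  · obtain ⟨y, hy, hyg⟩ := ht g.1
    refine ⟨(y, 1), ?_, Prod.ext hyg (by simp)⟩
    rw [top_lowerCentralSeries_prod]
    exact mem_prod.mpr ⟨hy, one_mem _⟩

theorem autMN_prod_bot_top :
    autMN (M.prod (⊥ : Subgroup A)) (N.prod ⊤) = (autMN M N).map prodLeft := by
  refine le_antisymm (fun f hf => ?_) ?_
  · obtain ⟨hfM, hfN⟩ := mem_inf.mp hf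
    obtain ⟨t, rfl⟩ := exists_prodLeft_eq f
      (fun h => by simpa using (mem_prod.mp (hfM (h, 1))).2)
      (fun a => hfN (1, a) (mem_prod.mpr ⟨one_mem _, mem_top a⟩))
    exact mem_map_of_mem _
      (mem_inf.mpr ⟨prodLeft_mem_autM_iff.mp hfM, prodLeft_mem_autN_iff.mp hfN⟩)
  · rintro _ ⟨t, ht, rfl⟩
    obtain ⟨htM, htN⟩ := mem_inf.mp ht
    exact mem_inf.mpr ⟨prodLeft_mem_autM_iff.mpr htM, prodLeft_mem_autN_iff.mpr htN⟩

end MulAut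

theorem CommGroup.top_lowerCentralSeries_eq_bot {A : Type*} [CommGroup A] {k : ℕ} (hk : 1 ≤ k) :
    (⊤ : Subgroup A).lowerCentralSeries k = ⊥ := by
  have h₁ : (⊤ : Subgroup A).lowerCentralSeries 1 = ⊥ :=
    lowerCentralSeries_one_eq_bot_iff.mpr inferInstance
  exact le_bot_iff.mp (h₁ ▸ Subgroup.lowerCentralSeries_antitone ⊤ hk)

theorem autMN_lowerCentralSeries_prod_center {H A : Type*} [Group H] [CommGroup A] {k : ℕ}
    (hk : 1 ≤ k) :
    autMN ((⊤ : Subgroup (H × A)).lowerCentralSeries k) (center (H × A)) =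
      (autMN ((⊤ : Subgroup H).lowerCentralSeries k) (center H)).map MulAut.prodLeft := by
  rw [top_lowerCentralSeries_prod, CommGroup.top_lowerCentralSeries_eq_bot hk,
    Subgroup.center_prod, CommGroup.center_eq_top, MulAut.autMN_prod_bot_top]

theorem statement2_general (H A : Type u) [Group H] [CommGroup A]
    (n : ℕ) (hn : 2 ≤ n) :
    ∃ φ : (autMN ((⊤ : Subgroup (H × A)).lowerCentralSeries (n - 1)) (Subgroup.center (H × A))) ≃*
          (autMN ((⊤ : Subgroup H).lowerCentralSeries (n - 1)) (Subgroup.center H)),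
      ∀ f : (autMN ((⊤ : Subgroup (H × A)).lowerCentralSeries (n - 1)) (Subgroup.center (H × A))),
        (f : MulAut (H × A)) ∈ autC (H × A) (n - 1) ↔
          (φ f : MulAut H) ∈ autC H (n - 1) := by
  let ψ := ((autMN ((⊤ : Subgroup H).lowerCentralSeries (n - 1)) (center H)).equivMapOfInjective
    MulAut.prodLeft MulAut.prodLeft_injective).trans
    (MulEquiv.subgroupCongr (autMN_lowerCentralSeries_prod_center (A := A) (by omega)).symm)
  refine ⟨ψ.symm, fun f => ?_⟩
  have hf : (f : MulAut (H × A)) = MulAut.prodLeft (ψ.symm f : MulAut H) :=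
    congrArg Subtype.val (ψ.apply_symm_apply f).symm
  rw [hf, MulAut.prodLeft_mem_autC_iff]

/-- for `G = H × A` with `H` purely non-abelian and `A` a non-trivial
abelian group, and `n ≥ 2`, there is an isomorphism
`φ : Aut_{Z(G)}^{γ_n(G)}(G) ≅ Aut_{Z(H)}^{γ_n(H)}(H)` mapping `Aut_c^{n-1}(G)`
onto `Aut_c^{n-1}(H)`.  Here `γ_n(G) = lowerCentralSeries G (n-1)`. -/
theorem statement2 (H A : Type u) [Group H] [CommGroup A] [Nontrivial A]
    (hH : PurelyNonabelian H) (n : ℕ) (hn : 2 ≤ n) :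
    ∃ φ : (autMN ((⊤ : Subgroup (H × A)).lowerCentralSeries (n - 1)) (Subgroup.center (H × A))) ≃*
          (autMN ((⊤ : Subgroup H).lowerCentralSeries (n - 1)) (Subgroup.center H)),
      ∀ f : (autMN ((⊤ : Subgroup (H × A)).lowerCentralSeries (n - 1)) (Subgroup.center (H × A))),
        (f : MulAut (H × A)) ∈ autC (H × A) (n - 1) ↔
          (φ f : MulAut H) ∈ autC H (n - 1) :=
  statement2_general H A n hn
end

section
/- Let G be a group and let M and N be normal subgroups of G such that M is abelian and [N, M] = 1 (every element of N commutes with every element of M). Then: (1) for each f ∈ Aut_N^M(G), if g_1, g_2 ∈ G satisfy g_1N = g_2N then g_1⁻¹f(g_1) = g_2⁻¹f(g_2), so the map α_f : G/N → M given by α_f(gN) = g⁻¹f(g) is well defined; (2) if f_1, f_2 ∈ Aut_N^M(G) and f_1 ≠ f_2, then α_{f_1} ≠ α_{f_2}. -/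
theorem inv_mul_map_mul_eq_of_commute {G F : Type*} [Group G] [FunLike F G G]
    [MonoidHomClass F G G] (f : F) {g n : G} (hfn : f n = n)
    (hcomm : Commute n (g⁻¹ * f g)) : (g * n)⁻¹ * f (g * n) = g⁻¹ * f g := by
  have hconj : (g * n)⁻¹ * f (g * n) = n⁻¹ * (g⁻¹ * f g) * n := by
    rw [map_mul, hfn]; group
  rw [hconj, mul_assoc, ← hcomm.eq, inv_mul_cancel_left]

theorem inv_mul_apply_eq_of_mem_autMN {G : Type*} [Group G] {M N : Subgroup G}
    (hNM : ∀ a ∈ N, ∀ b ∈ M, a * b = b * a) {f : MulAut G} (hf : f ∈ autMN M N)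
    {g₁ g₂ : G} (h : (g₁ : G ⧸ N) = g₂) : g₁⁻¹ * f g₁ = g₂⁻¹ * f g₂ := by
  obtain ⟨hfM, hfN⟩ := hf
  have hn : g₁⁻¹ * g₂ ∈ N := QuotientGroup.eq.mp h
  have hg₂ : g₂ = g₁ * (g₁⁻¹ * g₂) := (mul_inv_cancel_left g₁ g₂).symm
  rw [hg₂, inv_mul_map_mul_eq_of_commute f (hfN _ hn) (hNM _ hn _ (hfM g₁))]

theorem MulAut.inv_mul_apply_injective {G : Type*} [Group G] :
    Function.Injective fun (f : MulAut G) (g : G) => g⁻¹ * f g := fun _ _ h =>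
  MulEquiv.ext fun g => mul_left_cancel (congrFun h g)

theorem statement3_general {G : Type*} [Group G] (M N : Subgroup G)
    (hNM : ∀ a ∈ N, ∀ b ∈ M, a * b = b * a) :
    (∀ f ∈ autMN M N, ∀ g₁ g₂ : G, (g₁ : G ⧸ N) = (g₂ : G ⧸ N) →
        g₁⁻¹ * f g₁ = g₂⁻¹ * f g₂) ∧
    (∀ f₁ ∈ autMN M N, ∀ f₂ ∈ autMN M N, ∀ α₁ α₂ : G ⧸ N → G,
        (∀ g : G, α₁ g = g⁻¹ * f₁ g) → (∀ g : G, α₂ g = g⁻¹ * f₂ g) →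
        f₁ ≠ f₂ → α₁ ≠ α₂) := by
  refine ⟨fun f hf g₁ g₂ h => inv_mul_apply_eq_of_mem_autMN hNM hf h, ?_⟩
  rintro f₁ - f₂ - α₁ α₂ hα₁ hα₂ hne rfl
  exact hne <| MulAut.inv_mul_apply_injective <| funext fun g => (hα₁ g).symm.trans (hα₂ g)

/-- if `M, N ⊴ G`, `M` abelian and `[N, M] = 1`, then
(1) for `f ∈ Aut_N^M(G)` the value `g⁻¹ * f g` only depends on the coset `gN`,
so `α_f : G/N → M`, `α_f (gN) = g⁻¹ f(g)`, is well defined; and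
(2) distinct `f₁ ≠ f₂` in `Aut_N^M(G)` yield distinct maps `α_{f₁} ≠ α_{f₂}`. -/
theorem statement3 {G : Type*} [Group G] (M N : Subgroup G) [M.Normal] [N.Normal]
    (hM : ∀ a ∈ M, ∀ b ∈ M, a * b = b * a)
    (hNM : ∀ a ∈ N, ∀ b ∈ M, a * b = b * a) :
    (∀ f ∈ autMN M N, ∀ g₁ g₂ : G, (g₁ : G ⧸ N) = (g₂ : G ⧸ N) →
        g₁⁻¹ * f g₁ = g₂⁻¹ * f g₂) ∧
    (∀ f₁ ∈ autMN M N, ∀ f₂ ∈ autMN M N, ∀ α₁ α₂ : G ⧸ N → G,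
        (∀ g : G, α₁ g = g⁻¹ * f₁ g) → (∀ g : G, α₂ g = g⁻¹ * f₂ g) →
        f₁ ≠ f₂ → α₁ ≠ α₂) :=
  statement3_general M N hNM
end

section
/- Let G be a finite group, let M be a normal subgroup of G contained in the center Z(G), and let N be a normal subgroup of G with M ⊆ N. Then the map φ : Aut_N^M(G) → Hom(G/N, M) defined by φ(f) = α_f, where α_f(gN) = g⁻¹f(g), is a group isomorphism. (Here Hom(G/N, M) is the abelian group of all group homomorphisms from G/N to M under pointwise multiplication.) -/
/-!
Since `M` is central, the displacement `g ↦ g⁻¹ f(g)` of any `f ∈ Aut^M(G)` is a homomorphism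
`G → M`, and it kills `N` when `f` fixes `N`. Conversely, a homomorphism `χ : G → M` which kills
`M` twists the identity into the endomorphism `g ↦ g χ(g)`, an automorphism with inverse
`g ↦ g χ(g)⁻¹`. The two constructions are mutually inverse, and the displacement of `f₁ f₂` is the
product of the displacements because `f₁` fixes the displacement of `f₂`, which lies in `M ⊆ N`.
-/

section

open Subgroup QuotientGroup

variable {G : Type*} [Group G] {M N : Subgroup G}

def autM.displacement (hM : M ≤ center G) (f : autM M) : G →* M where
  toFun g := ⟨g⁻¹ * (f : MulAut G) g, f.2 g⟩
  map_one' := by ext; simp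
  map_mul' g h := by
    ext
    have hcomm : h⁻¹ * (g⁻¹ * (f : MulAut G) g) = (g⁻¹ * (f : MulAut G) g) * h⁻¹ :=
      mem_center_iff.mp (hM (f.2 g)) h⁻¹
    calc (g * h)⁻¹ * (f : MulAut G) (g * h)
        = h⁻¹ * (g⁻¹ * (f : MulAut G) g) * (f : MulAut G) h := by rw [map_mul]; group
      _ = (g⁻¹ * (f : MulAut G) g) * (h⁻¹ * (f : MulAut G) h) := by rw [hcomm]; group

@[simp]
lemma autM.coe_displacement_apply (hM : M ≤ center G) (f : autM M) (g : G) :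
    (autM.displacement hM f g : G) = g⁻¹ * (f : MulAut G) g :=
  rfl

def MonoidHom.centralTwist (hM : M ≤ center G) (χ : G →* M) : G →* G where
  toFun g := g * χ g
  map_one' := by simp
  map_mul' g h := by
    have hcomm : (χ g : G) * h = h * χ g := (mem_center_iff.mp (hM (χ g).2) h).symm
    calc g * h * (χ (g * h) : G) = g * (h * χ g) * χ h := by simp only [map_mul, coe_mul]; group
      _ = g * χ g * (h * χ h) := by rw [← hcomm]; group

lemma MonoidHom.centralTwist_apply (hM : M ≤ center G) (χ : G →* M) (g : G) :
    χ.centralTwist hM g = g * χ g :=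
  rfl

lemma MonoidHom.apply_centralTwist {χ : G →* M} (hM : M ≤ center G) (hχ : M ≤ χ.ker) (g : G) :
    χ (χ.centralTwist hM g) = χ g := by
  rw [centralTwist_apply, map_mul, hχ (χ g).2, mul_one]

def MonoidHom.centralTwistAut (hM : M ≤ center G) (χ : G →* M) (hχ : M ≤ χ.ker) : MulAut G :=
  { χ.centralTwist hM with
    invFun g := g * (χ g : G)⁻¹
    left_inv g := by
      change χ.centralTwist hM g * (χ (χ.centralTwist hM g) : G)⁻¹ = g
      rw [χ.apply_centralTwist hM hχ, centralTwist_apply, mul_inv_cancel_right]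
    right_inv g := by
      have hχg : χ (g * (χ g : G)⁻¹) = χ g := by
        rw [map_mul, map_inv, hχ (χ g).2, inv_one, mul_one]
      change g * (χ g : G)⁻¹ * χ (g * (χ g : G)⁻¹) = g
      rw [hχg, inv_mul_cancel_right] }

lemma MonoidHom.centralTwistAut_apply (hM : M ≤ center G) (χ : G →* M) (hχ : M ≤ χ.ker) (g : G) :
    χ.centralTwistAut hM hχ g = g * χ g :=
  rfl

variable [N.Normal]

def autMN.toHom (hM : M ≤ center G) (f : autMN M N) : G ⧸ N →* M :=
  lift N (autM.displacement hM ⟨f, f.2.1⟩) fun n hn => by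
    ext
    simp [f.2.2 n hn]

@[simp]
lemma autMN.coe_toHom_mk (hM : M ≤ center G) (f : autMN M N) (g : G) :
    (autMN.toHom hM f g : G) = g⁻¹ * (f : MulAut G) g :=
  rfl

def autMN.ofHom (hM : M ≤ center G) (hMN : M ≤ N) (ψ : G ⧸ N →* M) : autMN M N :=
  ⟨(ψ.comp (mk' N)).centralTwistAut hM fun m hm => by simp [(eq_one_iff m).mpr (hMN hm)],
    fun g => by simp [MonoidHom.centralTwistAut_apply],
    fun n hn => by simp [MonoidHom.centralTwistAut_apply, (eq_one_iff n).mpr hn]⟩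

def autMN.equivHom (hM : M ≤ center G) (hMN : M ≤ N) : autMN M N ≃ (G ⧸ N →* M) where
  toFun := autMN.toHom hM
  invFun := autMN.ofHom hM hMN
  left_inv f := by
    ext g
    simp [autMN.ofHom, MonoidHom.centralTwistAut_apply]
  right_inv ψ := by
    ext g
    simp [autMN.ofHom, MonoidHom.centralTwistAut_apply]

lemma autMN.toHom_mul_apply (hM : M ≤ center G) (hMN : M ≤ N) (f₁ f₂ : autMN M N) (x : G ⧸ N) :
    autMN.toHom hM (f₁ * f₂) x = autMN.toHom hM f₁ x * autMN.toHom hM f₂ x := by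
  induction x using QuotientGroup.induction_on with
  | H g =>
    ext
    have hfix : (f₁ : MulAut G) (g⁻¹ * (f₂ : MulAut G) g) = g⁻¹ * (f₂ : MulAut G) g :=
      f₁.2.2 _ (hMN (f₂.2.1 g))
    calc (g : G)⁻¹ * (f₁ : MulAut G) ((f₂ : MulAut G) g)
        = g⁻¹ * (f₁ : MulAut G) (g * (g⁻¹ * (f₂ : MulAut G) g)) := by group
      _ = (g⁻¹ * (f₁ : MulAut G) g) * (g⁻¹ * (f₂ : MulAut G) g) := by
          rw [map_mul, hfix, mul_assoc]

end

theorem statement5_general {G : Type*} [Group G] (M N : Subgroup G)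
    [N.Normal] (hM : M ≤ Subgroup.center G) (hMN : M ≤ N) :
    ∃ φ : (autMN M N) ≃ ((G ⧸ N) →* M),
      (∀ (f : autMN M N) (g : G),
          (φ f (g : G ⧸ N) : G) = g⁻¹ * (f : MulAut G) g) ∧
      (∀ (f₁ f₂ : autMN M N) (x : G ⧸ N),
          φ (f₁ * f₂) x = φ f₁ x * φ f₂ x) :=
  ⟨autMN.equivHom hM hMN, autMN.coe_toHom_mk hM, autMN.toHom_mul_apply hM hMN⟩

/-- for a finite group `G`, `M ⊴ G` central, `N ⊴ G` with `M ⊆ N`,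
the map `φ(f) = α_f`, `α_f(gN) = g⁻¹ f(g)`, is a group isomorphism from
`Aut_N^M(G)` onto the group `Hom(G/N, M)` (with pointwise multiplication). -/
theorem statement5 {G : Type*} [Group G] [Finite G] (M N : Subgroup G)
    [M.Normal] [N.Normal] (hM : M ≤ Subgroup.center G) (hMN : M ≤ N) :
    ∃ φ : (autMN M N) ≃ ((G ⧸ N) →* M),
      (∀ (f : autMN M N) (g : G),
          (φ f (g : G ⧸ N) : G) = g⁻¹ * (f : MulAut G) g) ∧
      (∀ (f₁ f₂ : autMN M N) (x : G ⧸ N),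
          φ (f₁ * f₂) x = φ f₁ x * φ f₂ x) :=
  statement5_general M N hM hMN
end

section
/- Let n ≥ 2, let G be a finite nilpotent group of nilpotency class at most n, and let H be a central subgroup of G (H ⊆ Z(G)) such that γ_n(G) ⊆ H. Then the map f ↦ α_f, where α_f(gH) = g⁻¹f(g), is a group isomorphism from Aut_c^{n-1}(G) onto Hom_c(G/H, γ_n(G)). -/
/-!
A class preserving automorphism `f` moves every `g` by an element `g⁻¹ f(g)` of the central
subgroup `γ_n(G)`, and centrality makes `g ↦ g⁻¹ f(g)` a homomorphism; it kills `H` because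
class preserving automorphisms fix central elements. Conversely `α` gives the endomorphism
`g ↦ g α(gH)`, whose inverse is `g ↦ g α(gH)⁻¹` since `γ_n(G) ≤ H`. The product `f₁ f₂` goes
to the pointwise product because `f₁` fixes the values of `α_{f₂}`, which lie in `H`.
-/

open Subgroup
open scoped commutatorElement

theorem inv_mul_conj_mem_lowerCentralSeries {G : Type*} [Group G] (m : ℕ) {x : G}
    (hx : x ∈ (⊤ : Subgroup G).lowerCentralSeries (m - 1)) (g : G) :
    g⁻¹ * (x⁻¹ * g * x) ∈ (⊤ : Subgroup G).lowerCentralSeries m := by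
  rcases m with _ | m
  · exact mem_top _
  · have hcomm : g⁻¹ * (x⁻¹ * g * x) = ⁅x⁻¹, g⁻¹⁆⁻¹ := by
      rw [commutatorElement_def]; group
    rw [hcomm, Subgroup.lowerCentralSeries_succ]
    exact inv_mem (commutator_mem_commutator (inv_mem hx) (mem_top _))

theorem autC_le_autM (G : Type*) [Group G] (m : ℕ) :
    autC G m ≤ autM ((⊤ : Subgroup G).lowerCentralSeries m) := by
  intro f hf g
  obtain ⟨x, hx, hfg⟩ := hf g
  rw [hfg]
  exact inv_mul_conj_mem_lowerCentralSeries m hx g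

theorem autC_le_autN {G : Type*} [Group G] (m : ℕ) {H : Subgroup G} (hH : H ≤ center G) :
    autC G m ≤ autN H := by
  intro f hf h hh
  obtain ⟨x, -, hfh⟩ := hf h
  rw [hfh, mem_center_iff.mp (hH hh) x⁻¹, inv_mul_cancel_right]

theorem mem_autC_iff_inv_mul {G : Type*} [Group G] (m : ℕ) (f : MulAut G) :
    f ∈ autC G m ↔ ∀ g : G, ∃ x ∈ (⊤ : Subgroup G).lowerCentralSeries (m - 1),
      g⁻¹ * f g = g⁻¹ * x⁻¹ * g * x := by
  refine forall_congr' fun g => exists_congr fun x => and_congr_right fun _ => ?_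
  simp only [mul_assoc, mul_right_inj]

section CentralAutomorphisms

variable {G : Type*} [Group G] {M H : Subgroup G}

def homOfAutM (hM : M ≤ center G) (f : autM M) : G →* M where
  toFun g := ⟨g⁻¹ * (f : MulAut G) g, f.2 g⟩
  map_one' := by simp
  map_mul' a b := Subtype.ext <| by
    have hcomm := mem_center_iff.mp (hM (f.2 a)) b⁻¹
    simp only [map_mul, coe_mul, mul_inv_rev]
    calc b⁻¹ * a⁻¹ * ((f : MulAut G) a * (f : MulAut G) b)
        = b⁻¹ * (a⁻¹ * (f : MulAut G) a) * (f : MulAut G) b := by group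
      _ = a⁻¹ * (f : MulAut G) a * (b⁻¹ * (f : MulAut G) b) := by rw [hcomm]; group

variable [H.Normal]

def mulAutOfHom (hM : M ≤ center G) (hMH : M ≤ H) (α : G ⧸ H →* M) : MulAut G where
  toFun g := g * α g
  invFun g := g * (α g : G)⁻¹
  left_inv g := by
    dsimp only
    rw [QuotientGroup.mk_mul_of_mem g (hMH (α g).2), mul_inv_cancel_right]
  right_inv g := by
    dsimp only
    rw [QuotientGroup.mk_mul_of_mem g (hMH (inv_mem (α g).2)), inv_mul_cancel_right]
  map_mul' a b := by
    have hcomm := mem_center_iff.mp (hM (α a).2) b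
    simp only [QuotientGroup.mk_mul, map_mul, coe_mul]
    rw [mul_assoc a, ← mul_assoc b, hcomm]
    group

def autMInfAutNEquivHom (hM : M ≤ center G) (hMH : M ≤ H) :
    ↥(autM M ⊓ autN H) ≃ (G ⧸ H →* M) where
  toFun f := QuotientGroup.lift H (homOfAutM hM ⟨f, f.2.1⟩) fun h hh =>
    Subtype.ext <| by simp [homOfAutM, f.2.2 h hh]
  invFun α := ⟨mulAutOfHom hM hMH α, fun g => by simp [mulAutOfHom],
    fun h hh => by simp [mulAutOfHom, (QuotientGroup.eq_one_iff h).mpr hh]⟩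
  left_inv f := Subtype.ext <| MulEquiv.ext fun g => by
    simp [mulAutOfHom, homOfAutM]
  right_inv α := MonoidHom.ext fun q => QuotientGroup.induction_on q fun g => Subtype.ext <| by
    simp [mulAutOfHom, homOfAutM]

theorem autMInfAutNEquivHom_apply_mk (hM : M ≤ center G) (hMH : M ≤ H)
    (f : ↥(autM M ⊓ autN H)) (g : G) :
    (autMInfAutNEquivHom hM hMH f g : G) = g⁻¹ * (f : MulAut G) g :=
  rfl

theorem autMInfAutNEquivHom_mul_apply (hM : M ≤ center G) (hMH : M ≤ H)
    (f₁ f₂ : ↥(autM M ⊓ autN H)) (q : G ⧸ H) :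
    (autMInfAutNEquivHom hM hMH (f₁ * f₂) q : G) =
      autMInfAutNEquivHom hM hMH f₁ q * autMInfAutNEquivHom hM hMH f₂ q := by
  induction q using QuotientGroup.induction_on with | H g
  simp only [autMInfAutNEquivHom_apply_mk, coe_mul, MulAut.mul_apply]
  have hfix := f₁.2.2 _ (hMH (f₂.2.1 g))
  calc g⁻¹ * (f₁ : MulAut G) ((f₂ : MulAut G) g)
      = g⁻¹ * (f₁ : MulAut G) (g * (g⁻¹ * (f₂ : MulAut G) g)) := by rw [mul_inv_cancel_left]
    _ = _ := by rw [map_mul, hfix, mul_assoc]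

end CentralAutomorphisms

/-- for `n ≥ 2`, a finite nilpotent group `G` of class at most `n`
(`γ_{n+1}(G) = 1`, i.e. `lowerCentralSeries G n = ⊥`) and a central subgroup `H`
with `γ_n(G) ⊆ H`, the map `f ↦ α_f`, `α_f(gH) = g⁻¹ f(g)`, is a group
isomorphism from `Aut_c^{n-1}(G)` onto `Hom_c(G/H, γ_n(G))`
(with pointwise multiplication). -/
theorem statement6 {G : Type*} [Group G] (n : ℕ)
    (H : Subgroup G) (hH : H ≤ Subgroup.center G)
    (hγ : (⊤ : Subgroup G).lowerCentralSeries (n - 1) ≤ H) :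
    letI : H.Normal := ⟨fun a ha g => by
      rw [(Subgroup.mem_center_iff.mp (hH ha)) g, mul_inv_cancel_right]
      exact ha⟩
    ∃ φ : (autC G (n - 1)) ≃
        {f : (G ⧸ H) →* ((⊤ : Subgroup G).lowerCentralSeries (n - 1)) //
          ∀ g : G, ∃ x ∈ (⊤ : Subgroup G).lowerCentralSeries (n - 2),
            (f (g : G ⧸ H) : G) = g⁻¹ * x⁻¹ * g * x},
      (∀ (f : autC G (n - 1)) (g : G),
          ((φ f).1 (g : G ⧸ H) : G) = g⁻¹ * (f : MulAut G) g) ∧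
      (∀ (f₁ f₂ : autC G (n - 1)) (x : G ⧸ H),
          ((φ (f₁ * f₂)).1 x : G) = ((φ f₁).1 x : G) * ((φ f₂).1 x : G)) := by
  have : H.Normal := ⟨fun a ha g => by rwa [mem_center_iff.mp (hH ha) g, mul_inv_cancel_right]⟩
  have hM := hγ.trans hH
  have hle : autC G (n - 1) ≤ autM _ ⊓ autN H := le_inf (autC_le_autM G _) (autC_le_autN _ hH)
  refine ⟨(Equiv.subtypeSubtypeEquivSubtype fun hf => hle hf).symm.trans
    ((autMInfAutNEquivHom hM hγ).subtypeEquiv fun f => mem_autC_iff_inv_mul _ _), fun f g => rfl,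
    fun f₁ f₂ x => autMInfAutNEquivHom_mul_apply hM hγ ⟨f₁, hle f₁.2⟩ ⟨f₂, hle f₂.2⟩ x⟩
end

section
/- Let p be a prime, let G be a finite non-abelian p-group, and let n ≥ 2. If Aut_c^{n-1}(G) = Autcent(G), then G is purely non-abelian. -/
/-!
Suppose `G ≃* K × B` with `B` abelian and nontrivial. Since `G` is non-abelian, `K` is a
nontrivial `p`-group, so it has a normal subgroup of index `p`, while `B` has an element of
order `p`; together they give a homomorphism `φ : K →* B` with `φ k ≠ 1` for some `k`. The shear
`(k, b) ↦ (k, b * φ k)` is a central automorphism. It is not class preserving at any level: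
conjugation cannot change the `B`-component because `B` is abelian, but the shear moves `(k, 1)`
to `(k, φ k)`.
-/

open Subgroup

theorem IsPGroup.exists_normal_index_eq_prime {p : ℕ} (hp : p.Prime) {K : Type*} [Group K]
    [Finite K] [Nontrivial K] (hK : IsPGroup p K) : ∃ N : Subgroup K, N.Normal ∧ N.index = p := by
  have := Fact.mk hp
  obtain ⟨m, hm0, hm⟩ := hK.nontrivial_iff_card.mp ‹_›
  obtain ⟨N, hN⟩ := Sylow.exists_subgroup_card_pow_prime p (n := m - 1)
    (hm ▸ pow_dvd_pow p (m.sub_le 1))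
  have hindex : N.index = p := by
    have hcard := N.card_mul_index
    rw [hN, hm, ← Nat.sub_add_cancel hm0, pow_succ, Nat.add_sub_cancel] at hcard
    exact Nat.eq_of_mul_eq_mul_left (pow_pos hp.pos _) hcard
  refine ⟨N, normal_of_index_eq_minFac_card ?_, hindex⟩
  rw [hindex, hm, hp.pow_minFac hm0.ne']

theorem exists_monoidHom_apply_ne_one_of_index_eq_orderOf {p : ℕ} [Fact p.Prime]
    {K B : Type*} [Group K] [Group B] (N : Subgroup K) [N.Normal] (hN : N.index = p) {b : B}
    (hb : orderOf b = p) : ∃ (φ : K →* B) (k : K), φ k ≠ 1 := by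
  let ψ : K ⧸ N ≃* zpowers b := mulEquivOfPrimeCardEq hN (Nat.card_zpowers b ▸ hb)
  obtain ⟨k, hk⟩ : ∃ k, k ∉ N := by
    by_contra! hall
    have hNtop : N = ⊤ := (Subgroup.eq_top_iff' N).mpr hall
    exact (Fact.out : p.Prime).one_lt.ne' (hN ▸ index_eq_one.mpr hNtop)
  refine ⟨(zpowers b).subtype.comp (ψ.toMonoidHom.comp (QuotientGroup.mk' N)), k, ?_⟩
  simpa [ψ, QuotientGroup.eq_one_iff] using hk

theorem IsPGroup.exists_monoidHom_apply_ne_one {p : ℕ} (hp : p.Prime) {K B : Type*} [Group K]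
    [Group B] [Finite K] [Finite B] [Nontrivial K] [Nontrivial B] (hK : IsPGroup p K)
    (hB : IsPGroup p B) : ∃ (φ : K →* B) (k : K), φ k ≠ 1 := by
  have := Fact.mk hp
  obtain ⟨N, _, hN⟩ := hK.exists_normal_index_eq_prime hp
  have hpB : p ∣ Nat.card B := hB.card_eq_or_dvd.resolve_left Finite.one_lt_card.ne'
  obtain ⟨b, hb⟩ := exists_prime_orderOf_dvd_card' p hpB
  exact exists_monoidHom_apply_ne_one_of_index_eq_orderOf N hN hb

section Shear

variable {K B : Type*} [Group K] [CommGroup B] (φ : K →* B)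

def MulEquiv.prodShear : K × B ≃* K × B where
  toFun x := (x.1, x.2 * φ x.1)
  invFun x := (x.1, x.2 * (φ x.1)⁻¹)
  left_inv x := by simp
  right_inv x := by simp
  map_mul' x y := Prod.ext rfl <| by
    simp only [Prod.snd_mul, Prod.fst_mul, map_mul]
    exact mul_mul_mul_comm ..

@[simp]
theorem MulEquiv.prodShear_apply (x : K × B) : prodShear φ x = (x.1, x.2 * φ x.1) :=
  rfl

theorem MulEquiv.prodShear_mem_autM_center : prodShear φ ∈ autM (center (K × B)) := by
  intro x
  rw [Subgroup.center_prod, mem_prod, CommGroup.center_eq_top]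
  simp

end Shear

theorem MulAut.congr_mem_autM_center {G H : Type*} [Group G] [Group H] (e : G ≃* H)
    {σ : MulAut G} (hσ : σ ∈ autM (center G)) : MulAut.congr e σ ∈ autM (center H) := by
  intro h
  rw [mem_center_iff]
  intro h'
  have hc := mem_center_iff.mp (hσ (e.symm h)) (e.symm h')
  simpa using congrArg e hc

theorem map_apply_eq_of_mem_autC {G B : Type*} [Group G] [CommGroup B] (f : G →* B) {m : ℕ}
    {α : MulAut G} (hα : α ∈ autC G m) (g : G) : f (α g) = f g := by
  obtain ⟨x, -, hx⟩ := hα g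
  rw [hx, map_mul, map_mul, mul_comm, ← mul_assoc, map_inv, mul_inv_cancel, one_mul]

theorem not_autM_center_le_autC {G K B : Type*} [Group G] [Group K] [CommGroup B]
    (e : G ≃* K × B) {φ : K →* B} {k : K} (hk : φ k ≠ 1) (m : ℕ) :
    ¬ autM (center G) ≤ autC G m := fun hle => by
  have hα := hle (MulAut.congr_mem_autM_center e.symm (MulEquiv.prodShear_mem_autM_center φ))
  have hsnd := map_apply_eq_of_mem_autC ((MonoidHom.snd K B).comp e.toMonoidHom) hα (e.symm (k, 1))
  exact hk (by simpa using hsnd)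

theorem statement9_general {p : ℕ} (hp : p.Prime) {G : Type u} [Group G] [Finite G]
    (hpG : IsPGroup p G) (hna : ¬ ∀ a b : G, a * b = b * a)
    (n : ℕ)
    (h : autC G (n - 1) = autM (Subgroup.center G)) :
    PurelyNonabelian G := by
  rintro ⟨K, B, _, _, _, ⟨e⟩⟩
  have : Finite (K × B) := Finite.of_equiv G e.toEquiv
  have : Finite K := Finite.prod_left B
  have : Finite B := Finite.prod_right K
  have : Nontrivial K := by
    by_contra hK
    rw [not_nontrivial_iff_subsingleton] at hK
    exact hna fun a b => e.injective <| Prod.ext (Subsingleton.elim _ _) (by simp [mul_comm])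
  have hKB : IsPGroup p (K × B) := hpG.of_equiv e
  have hK := hKB.of_surjective (MonoidHom.fst K B) Prod.fst_surjective
  have hB := hKB.of_surjective (MonoidHom.snd K B) Prod.snd_surjective
  obtain ⟨φ, k, hk⟩ := hK.exists_monoidHom_apply_ne_one hp hB
  exact not_autM_center_le_autC e hk (n - 1) h.ge

/-- if `G` is a finite non-abelian `p`-group, `n ≥ 2`, and
`Aut_c^{n-1}(G) = Autcent(G)`, then `G` is purely non-abelian. -/
theorem statement9 {p : ℕ} (hp : p.Prime) {G : Type u} [Group G] [Finite G]
    (hpG : IsPGroup p G) (hna : ¬ ∀ a b : G, a * b = b * a)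
    (n : ℕ) (hn : 2 ≤ n)
    (h : autC G (n - 1) = autM (Subgroup.center G)) :
    PurelyNonabelian G :=
  statement9_general hp hpG hna n h
end

section
/- Let p be a prime, let G be a finite non-abelian p-group, and let n ≥ 2. If Aut_c^{n-1}(G) = Autcent(G), then γ_n(G) ⊆ Z(G) and d(γ_n(G)) = d(Z(G)), where d denotes the minimal number of generators. -/
/-!
Conjugation by `x ∈ γ_{n-1}` lies in `Aut_c^{n-1}(G) = Autcent(G)`, so every commutator
`[x, g]` is central and `γ_n ≤ Z(G)`.

For the ranks, recall that a finite abelian `p`-group `A` has exactly `p ^ d(A)` elements with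
`a ^ p = 1`: their number is `|A / A^p|`, the elementary abelian group `A / A^p` has order
`p ^ d(A / A^p)`, and `d(A / A^p) = d(A)` because a subgroup `H` with `H A^p = A` is all of `A`.
Hence it suffices that `γ_n` contains every central `z` of order `p`. As `G` is non-abelian, `Z(G)`
lies in a normal subgroup `M` of index `p`, and `σ : G → G / M ≅ ⟨z⟩` is a central homomorphism
killing `Z(G)`, so `g ↦ g σ(g)` is a central automorphism. It is `(n-1)`-th class preserving,
so each `σ(g)` is a commutator `[g⁻¹, x⁻¹]` with `x ∈ γ_{n-1}`, and `⟨z⟩ = σ(G) ≤ γ_n`.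
-/

open Subgroup
open scoped commutatorElement IsMulCommutative

section

variable {p : ℕ}

theorem Group.rank_le_finrank_additive {V : Type*} [CommGroup V] [Finite V] [Fact p.Prime]
    [Module (ZMod p) (Additive V)] : Group.rank V ≤ Module.finrank (ZMod p) (Additive V) := by
  classical
  let b := Module.finBasis (ZMod p) (Additive V)
  have hclosure : AddSubgroup.closure (Set.range b) = ⊤ := by
    refine eq_top_iff.mpr fun x _ => ?_
    have hle : Submodule.span (ZMod p) (Set.range b) ≤
        AddSubgroup.toZModSubmodule p (AddSubgroup.closure (Set.range b)) :=
      Submodule.span_le.mpr AddSubgroup.subset_closure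
    exact hle (b.span_eq ▸ Submodule.mem_top)
  have hS : closure ((Finset.univ.image fun i => (b i).toMul : Finset V) : Set V) = ⊤ := by
    have := congrArg AddSubgroup.toSubgroup' hclosure
    rw [AddSubgroup.toSubgroup'_closure, map_top] at this
    convert this using 2
    simp only [Finset.coe_image, Finset.coe_univ, Set.image_univ]
    rfl
  exact (Group.rank_le hS).trans (Finset.card_image_le.trans (by simp))

theorem card_eq_pow_rank_of_forall_pow_eq_one {V : Type*} [CommGroup V] [Finite V]
    (hp : p.Prime) (hV : ∀ v : V, v ^ p = 1) : Nat.card V = p ^ Group.rank V := by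
  have : Fact p.Prime := ⟨hp⟩
  let _ : Module (ZMod p) (Additive V) := AddCommGroup.zmodModule fun a => by
    rw [← ofMul_toMul a, ← ofMul_pow, hV, ofMul_one]
  have : Fintype (Additive V) := Fintype.ofFinite _
  have hcard : Nat.card V = p ^ Module.finrank (ZMod p) (Additive V) := by
    rw [← Nat.card_congr Additive.ofMul.symm, Nat.card_eq_fintype_card,
      Module.card_eq_pow_finrank (K := ZMod p), ZMod.card]
  refine le_antisymm (Nat.le_of_dvd (pow_pos hp.pos _) (card_dvd_exponent_pow_rank' V hV)) ?_
  rw [hcard]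
  exact Nat.pow_le_pow_right hp.pos Group.rank_le_finrank_additive

theorem IsPGroup.subsingleton_of_forall_exists_pow_eq {P : Type*} [Group P] [Finite P]
    (hp : p.Prime) (hP : IsPGroup p P) (h : ∀ g : P, ∃ c, c ^ p = g) : Subsingleton P := by
  have : Fact p.Prime := ⟨hp⟩
  rcases hP.card_eq_or_dvd with hcard | hdvd
  · exact (Nat.card_eq_one_iff_unique.mp hcard).1
  · obtain ⟨g, hg⟩ := exists_prime_orderOf_dvd_card' p hdvd
    have hinj : Function.Injective (· ^ p : P → P) := Finite.injective_iff_surjective.mpr h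
    have hg1 : g = 1 := hinj (by simp [← hg, pow_orderOf_eq_one])
    rw [hg1, orderOf_one] at hg
    exact absurd hg.symm hp.ne_one

section CommGroup

variable {A : Type*} [CommGroup A] [Finite A]

theorem IsPGroup.eq_top_of_sup_range_powMonoidHom_eq_top (hp : p.Prime) (hA : IsPGroup p A)
    {H : Subgroup A} (hH : H ⊔ (powMonoidHom p).range = ⊤) : H = ⊤ := by
  rw [← QuotientGroup.subsingleton_iff]
  refine (hA.to_quotient H).subsingleton_of_forall_exists_pow_eq hp fun q => ?_
  obtain ⟨a, rfl⟩ := QuotientGroup.mk_surjective q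
  obtain ⟨h, hh, _, ⟨c, rfl⟩, rfl⟩ := mem_sup.mp (hH ▸ mem_top a)
  exact ⟨c, by simp [(QuotientGroup.eq_one_iff h).mpr hh]⟩

theorem IsPGroup.rank_quotient_range_powMonoidHom (hp : p.Prime) (hA : IsPGroup p A) :
    Group.rank (A ⧸ (powMonoidHom p : A →* A).range) = Group.rank A := by
  classical
  set R := (powMonoidHom p : A →* A).range
  refine le_antisymm (Group.rank_le_of_surjective _ (QuotientGroup.mk'_surjective R)) ?_
  obtain ⟨S, hcard, hS⟩ := Group.rank_spec (A ⧸ R)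
  let lift := Function.surjInv (QuotientGroup.mk'_surjective R)
  have hmap : (closure (S.image lift : Set A)).map (QuotientGroup.mk' R) = ⊤ := by
    rw [MonoidHom.map_closure, Finset.coe_image, Set.image_image,
      funext (Function.surjInv_eq (QuotientGroup.mk'_surjective R)), Set.image_id', hS]
  have htop : closure (S.image lift : Set A) = ⊤ := by
    refine hA.eq_top_of_sup_range_powMonoidHom_eq_top hp ?_
    have := comap_map_eq (QuotientGroup.mk' R) (closure (S.image lift : Set A))
    rwa [hmap, comap_top, QuotientGroup.ker_mk', eq_comm] at this
  exact (Group.rank_le htop).trans (hcard ▸ Finset.card_image_le)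

theorem MonoidHom.card_ker_eq_card_quotient_range (f : A →* A) :
    Nat.card f.ker = Nat.card (A ⧸ f.range) := by
  have hker := f.ker.card_mul_index
  have hrange := f.range.card_mul_index
  rw [index_ker] at hker
  rw [index_eq_card] at hrange
  exact Nat.eq_of_mul_eq_mul_left Nat.card_pos (by rw [hrange, mul_comm, hker])

theorem IsPGroup.card_ker_powMonoidHom (hp : p.Prime) (hA : IsPGroup p A) :
    Nat.card (powMonoidHom p : A →* A).ker = p ^ Group.rank A := by
  rw [MonoidHom.card_ker_eq_card_quotient_range, card_eq_pow_rank_of_forall_pow_eq_one hp,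
    hA.rank_quotient_range_powMonoidHom hp]
  intro q
  obtain ⟨a, rfl⟩ := QuotientGroup.mk_surjective q
  exact (QuotientGroup.eq_one_iff _).mpr ⟨a, rfl⟩

theorem IsPGroup.rank_eq_of_ker_powMonoidHom_le (hp : p.Prime) (hA : IsPGroup p A)
    {N : Subgroup A} (hN : (powMonoidHom p : A →* A).ker ≤ N) :
    Group.rank N = Group.rank A := by
  have hmap : (powMonoidHom p : N →* N).ker.map N.subtype = (powMonoidHom p : A →* A).ker := by
    ext a
    simp only [mem_map, MonoidHom.mem_ker, powMonoidHom_apply, N.coe_subtype]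
    refine ⟨?_, fun ha => ⟨⟨a, hN ha⟩, Subtype.ext ha, rfl⟩⟩
    rintro ⟨b, hb, rfl⟩
    simpa using congrArg Subtype.val hb
  have hcard := (hA.to_subgroup N).card_ker_powMonoidHom hp
  rw [← card_map_of_injective N.subtype_injective, hmap, hA.card_ker_powMonoidHom hp] at hcard
  exact (Nat.pow_right_injective hp.two_le hcard).symm

end CommGroup

section Automorphisms

variable {G : Type*} [Group G]

theorem inv_mul_conj_mem_lowerCentralSeries_succ {k : ℕ} {x : G}
    (hx : x ∈ (⊤ : Subgroup G).lowerCentralSeries k) (g : G) :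
    g⁻¹ * (x⁻¹ * g * x) ∈ (⊤ : Subgroup G).lowerCentralSeries (k + 1) := by
  have hcomm : g⁻¹ * (x⁻¹ * g * x) = ⁅x⁻¹, g⁻¹⁆⁻¹ := by
    rw [commutatorElement_def]; group
  rw [hcomm]
  exact inv_mem (commutator_mem_commutator (inv_mem hx) (mem_top _))

theorem inv_mul_mem_lowerCentralSeries_of_mem_autC {k : ℕ} {f : MulAut G}
    (hf : f ∈ autC G (k + 1)) (g : G) :
    g⁻¹ * f g ∈ (⊤ : Subgroup G).lowerCentralSeries (k + 1) := by
  obtain ⟨x, hx, hfg⟩ := hf g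
  rw [hfg]
  exact inv_mul_conj_mem_lowerCentralSeries_succ hx g

theorem conj_inv_mem_autC {k : ℕ} {x : G} (hx : x ∈ (⊤ : Subgroup G).lowerCentralSeries k) :
    MulAut.conj x⁻¹ ∈ autC G (k + 1) :=
  fun g => ⟨x, hx, by simp⟩

theorem lowerCentralSeries_le_center_of_autC_le {k : ℕ}
    (h : autC G (k + 1) ≤ autM (center G)) :
    (⊤ : Subgroup G).lowerCentralSeries (k + 1) ≤ center G := by
  rw [Subgroup.lowerCentralSeries_succ, commutator_le]
  intro x hx g _
  have hcentral := h (conj_inv_mem_autC (inv_mem hx)) g⁻¹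
  have hcomm : ⁅x, g⁆ = ((g⁻¹)⁻¹ * MulAut.conj x⁻¹⁻¹ g⁻¹)⁻¹ := by
    simp [commutatorElement_def, MulAut.conj_apply, mul_assoc]
  rw [hcomm]
  exact inv_mem hcentral

noncomputable def MulAut.ofCentralHom [Finite G] (σ : G →* G) (hσ : σ.range ≤ center G)
    (hker : center G ≤ σ.ker) : MulAut G :=
  MulEquiv.ofBijective
    (MonoidHom.mk' (fun g => g * σ g) fun a b => by
      rw [map_mul, mul_assoc, ← mul_assoc b, mem_center_iff.mp (hσ ⟨a, rfl⟩) b]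
      simp only [mul_assoc])
    (by
      refine Finite.injective_iff_bijective.mp ((injective_iff_map_eq_one _).mpr fun g hg => ?_)
      have hg' : g = (σ g)⁻¹ := eq_inv_of_mul_eq_one_left hg
      have hσg : σ g = 1 := hker (hg' ▸ inv_mem (hσ ⟨g, rfl⟩))
      simpa [hσg] using hg')

theorem MulAut.ofCentralHom_apply [Finite G] {σ : G →* G} (hσ : σ.range ≤ center G)
    (hker : center G ≤ σ.ker) (g : G) : MulAut.ofCentralHom σ hσ hker g = g * σ g :=
  rfl

theorem MulAut.ofCentralHom_mem_autM [Finite G] {σ : G →* G} (hσ : σ.range ≤ center G)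
    (hker : center G ≤ σ.ker) : MulAut.ofCentralHom σ hσ hker ∈ autM (center G) := fun g => by
  simpa [MulAut.ofCentralHom_apply] using hσ ⟨g, rfl⟩

theorem range_le_lowerCentralSeries_of_autM_le [Finite G] {k : ℕ}
    (h : autM (center G) ≤ autC G (k + 1)) {σ : G →* G} (hσ : σ.range ≤ center G)
    (hker : center G ≤ σ.ker) : σ.range ≤ (⊤ : Subgroup G).lowerCentralSeries (k + 1) := by
  rintro _ ⟨g, rfl⟩
  have := inv_mul_mem_lowerCentralSeries_of_mem_autC (h (MulAut.ofCentralHom_mem_autM hσ hker)) g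
  simpa [MulAut.ofCentralHom_apply] using this

end Automorphisms

theorem IsPGroup.exists_range_eq_zpowers_le_ker {G : Type*} [Group G] [Finite G]
    (hp : p.Prime) (hG : IsPGroup p G) {H : Subgroup G} (hH : H ≠ ⊤) {z : G}
    (hz : orderOf z = p) : ∃ σ : G →* G, σ.range = zpowers z ∧ H ≤ σ.ker := by
  have : Fact p.Prime := ⟨hp⟩
  obtain ⟨t, ht⟩ := IsPGroup.iff_card.mp hG
  obtain ⟨s, hs⟩ := IsPGroup.iff_card.mp (hG.to_subgroup H)
  have hst : s < t := by
    refine lt_of_le_of_ne ?_ fun hst => hH (eq_top_of_card_eq H (by rw [hs, ht, hst]))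
    exact (Nat.pow_dvd_pow_iff_le_right hp.one_lt).mp (hs ▸ ht ▸ card_subgroup_dvd_card H)
  obtain ⟨M, hM, hHM⟩ := Sylow.exists_subgroup_card_pow_prime_le p
    (ht ▸ pow_dvd_pow p (Nat.sub_le t 1)) H hs (Nat.le_sub_one_of_lt hst)
  have hindex : M.index = p := by
    have := M.card_mul_index
    rw [hM, ht, ← Nat.sub_add_cancel (Nat.one_le_of_lt hst), pow_succ, Nat.add_sub_cancel] at this
    exact Nat.eq_of_mul_eq_mul_left (pow_pos hp.pos _) this
  have : M.Normal := normal_of_index_eq_minFac_card (by rw [hindex, ht, hp.pow_minFac (by omega)])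
  let e : G ⧸ M ≃* zpowers z :=
    mulEquivOfPrimeCardEq (by rw [← index_eq_card, hindex]) (by rw [Nat.card_zpowers, hz])
  refine ⟨(zpowers z).subtype.comp ((e : G ⧸ M →* zpowers z).comp (QuotientGroup.mk' M)), ?_, ?_⟩
  · have hsurj := e.surjective.comp (QuotientGroup.mk'_surjective M)
    rw [MonoidHom.range_comp, MonoidHom.range_eq_top.mpr hsurj, ← MonoidHom.range_eq_map,
      range_subtype]
  · intro h hh
    simp [(QuotientGroup.eq_one_iff h).mpr (hHM hh)]

theorem mem_lowerCentralSeries_of_mem_center_of_pow_eq_one {G : Type*} [Group G] [Finite G]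
    (hp : p.Prime) (hG : IsPGroup p G) (hcenter : center G ≠ ⊤) {k : ℕ}
    (h : autM (center G) ≤ autC G (k + 1)) {z : G} (hz : z ∈ center G) (hzp : z ^ p = 1) :
    z ∈ (⊤ : Subgroup G).lowerCentralSeries (k + 1) := by
  have : Fact p.Prime := ⟨hp⟩
  rcases eq_or_ne z 1 with rfl | hz1
  · exact one_mem _
  obtain ⟨σ, hrange, hker⟩ :=
    hG.exists_range_eq_zpowers_le_ker hp hcenter (orderOf_eq_prime hzp hz1)
  have hσ : σ.range ≤ center G := hrange ▸ zpowers_le.mpr hz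
  exact range_le_lowerCentralSeries_of_autM_le h hσ hker (hrange ▸ mem_zpowers z)

end

/-- if `G` is a finite non-abelian `p`-group, `n ≥ 2`, and
`Aut_c^{n-1}(G) = Autcent(G)`, then `γ_n(G) ⊆ Z(G)` and
`d(γ_n(G)) = d(Z(G))`, where `d` is the minimal number of generators. -/
theorem statement10 {p : ℕ} (hp : p.Prime) {G : Type u} [Group G] [Finite G]
    (hpG : IsPGroup p G) (hna : ¬ ∀ a b : G, a * b = b * a)
    (n : ℕ) (hn : 2 ≤ n)
    (h : autC G (n - 1) = autM (Subgroup.center G)) :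
    (⊤ : Subgroup G).lowerCentralSeries (n - 1) ≤ Subgroup.center G ∧
      Group.rank ((⊤ : Subgroup G).lowerCentralSeries (n - 1)) =
        Group.rank (Subgroup.center G) := by
  obtain ⟨k, rfl⟩ := Nat.exists_eq_add_of_le' hn
  rw [show k + 2 - 1 = k + 1 by omega] at h ⊢
  have hle : (⊤ : Subgroup G).lowerCentralSeries (k + 1) ≤ center G :=
    lowerCentralSeries_le_center_of_autC_le h.le
  have hcenter : center G ≠ ⊤ := fun htop => hna fun a b => mem_center_iff.mp (htop ▸ mem_top b) a
  refine ⟨hle, ?_⟩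
  rw [← Group.rank_congr (subgroupOfEquivOfLe hle)]
  refine (hpG.to_subgroup (center G)).rank_eq_of_ker_powMonoidHom_le hp fun z hz => ?_
  exact mem_lowerCentralSeries_of_mem_center_of_pow_eq_one hp hpG hcenter h.ge z.2
    (congrArg Subtype.val hz)
end

section
/- Let p be a prime, let G be a finite non-abelian p-group, and let n ≥ 2. If γ_n(G) = Z(G) and Aut_c^{n-1}(G) is isomorphic as a group to Hom(G/Z(G), γ_n(G)), then Aut_c^{n-1}(G) = Autcent(G). -/
/-!
Since `γ_n(G) = Z(G)`, an `(n-1)`-th class preserving automorphism `g ↦ x⁻¹ g x` moves `g`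
by the commutator `[g, x] ∈ γ_n(G) = Z(G)`, so `Aut_c^{n-1}(G) ≤ Autcent(G)`. Conversely, a
central automorphism `f` is determined by the homomorphism `g ↦ g⁻¹ f(g)` from `G` to `Z(G)`.
Central automorphisms fix all commutators and `Z(G) = γ_n(G) ≤ γ_2(G)`, so this homomorphism
kills `Z(G)`, whence `|Autcent(G)| ≤ |Hom(G/Z(G), γ_n(G))| = |Aut_c^{n-1}(G)|`.
-/

open Subgroup
open scoped commutatorElement

section

variable {G : Type*} [Group G]

theorem commutatorElement_mul_mem_center_left (a b : G) {z : G} (hz : z ∈ center G) :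
    ⁅a * z, b⁆ = ⁅a, b⁆ := by
  rw [commutatorElement_mul_left_eq_conj_mul,
    commutatorElement_eq_one_iff_commute.mpr (mem_center_iff.mp hz b).symm]
  group

theorem commutatorElement_mul_mem_center_right (a b : G) {z : G} (hz : z ∈ center G) :
    ⁅a, b * z⁆ = ⁅a, b⁆ := by
  rw [← commutatorElement_inv, commutatorElement_mul_mem_center_left _ _ hz,
    commutatorElement_inv]

theorem autM_center_le_autN_commutator : autM (center G) ≤ autN (commutator G) := by
  intro f hf
  let fixedPoints : Subgroup G := (f : G →* G).eqLocus (MonoidHom.id G)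
  suffices commutator G ≤ fixedPoints from fun g hg => this hg
  refine commutator_le.mpr fun a _ b _ => ?_
  have hfa : f a = a * (a⁻¹ * f a) := by group
  have hfb : f b = b * (b⁻¹ * f b) := by group
  show f ⁅a, b⁆ = ⁅a, b⁆
  rw [map_commutatorElement, hfa, hfb, commutatorElement_mul_mem_center_left _ _ (hf a),
    commutatorElement_mul_mem_center_right _ _ (hf b)]

theorem autC_le_autM_lowerCentralSeries (m : ℕ) :
    autC G m ≤ autM ((⊤ : Subgroup G).lowerCentralSeries m) := by
  intro f hf g
  obtain ⟨x, hx, hfg⟩ := hf g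
  have hcomm : g⁻¹ * f g = ⁅x⁻¹, g⁻¹⁆⁻¹ := by rw [hfg, commutatorElement_def]; group
  rw [hcomm]
  refine inv_mem ?_
  cases m with
  | zero => exact mem_top _
  | succ k =>
    rw [Subgroup.lowerCentralSeries_succ]
    exact commutator_mem_commutator (inv_mem hx) (mem_top _)

section CentralSubgroup

variable {M : Subgroup G}

def autM.toMonoidHom (hM : M ≤ center G) (f : autM M) : G →* M where
  toFun g := ⟨g⁻¹ * f.1 g, f.2 g⟩
  map_one' := by ext; simp
  map_mul' a b := by
    ext
    have hcomm : b⁻¹ * (a⁻¹ * f.1 a) = (a⁻¹ * f.1 a) * b⁻¹ :=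
      mem_center_iff.mp (hM (f.2 a)) b⁻¹
    calc (a * b)⁻¹ * f.1 (a * b) = (b⁻¹ * (a⁻¹ * f.1 a)) * f.1 b := by rw [map_mul]; group
      _ = (a⁻¹ * f.1 a) * (b⁻¹ * f.1 b) := by rw [hcomm]; group

theorem autM.toMonoidHom_injective (hM : M ≤ center G) :
    Function.Injective (autM.toMonoidHom hM) := by
  intro f₁ f₂ h
  ext g
  exact mul_left_cancel (congrArg Subtype.val (DFunLike.congr_fun h g))

theorem card_autM_le_card_monoidHom_quotient [Finite G] (hM : M ≤ center G)
    {N : Subgroup G} [N.Normal] (hN : autM M ≤ autN N) :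
    Nat.card (autM M) ≤ Nat.card (G ⧸ N →* M) := by
  have : Finite (G ⧸ N →* M) := .of_injective _ DFunLike.coe_injective
  let toQuotientHom (f : autM M) : G ⧸ N →* M :=
    QuotientGroup.lift N (autM.toMonoidHom hM f) fun x hx => by
      ext; simp [autM.toMonoidHom, hN f.2 x hx]
  refine Nat.card_le_card_of_injective toQuotientHom fun f₁ f₂ h => ?_
  refine autM.toMonoidHom_injective hM (MonoidHom.ext fun g => ?_)
  exact DFunLike.congr_fun h (g : G ⧸ N)

end CentralSubgroup

end

theorem statement11_general {G : Type u} [Group G] [Finite G]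
    (n : ℕ) (hn : 2 ≤ n)
    (hγZ : (⊤ : Subgroup G).lowerCentralSeries (n - 1) = Subgroup.center G)
    (hiso : ∃ φ : (autC G (n - 1)) ≃
        ((G ⧸ Subgroup.center G) →* ((⊤ : Subgroup G).lowerCentralSeries (n - 1))),
      ∀ (f₁ f₂ : autC G (n - 1)) (x : G ⧸ Subgroup.center G),
        φ (f₁ * f₂) x = φ f₁ x * φ f₂ x) :
    autC G (n - 1) = autM (Subgroup.center G) := by
  obtain ⟨φ, -⟩ := hiso
  have hZ : center G ≤ commutator G := by
    rw [← hγZ, ← top_lowerCentralSeries_one]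
    exact Subgroup.lowerCentralSeries_antitone _ (by omega)
  have hfix : autM ((⊤ : Subgroup G).lowerCentralSeries (n - 1)) ≤ autN (center G) := by
    rw [hγZ]; exact fun f hf x hx => autM_center_le_autN_commutator hf x (hZ hx)
  rw [← hγZ]
  refine eq_of_le_of_card_ge (autC_le_autM_lowerCentralSeries _) ?_
  calc Nat.card (autM ((⊤ : Subgroup G).lowerCentralSeries (n - 1)))
      ≤ Nat.card (G ⧸ center G →* (⊤ : Subgroup G).lowerCentralSeries (n - 1)) :=
        card_autM_le_card_monoidHom_quotient hγZ.le hfix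
    _ = Nat.card (autC G (n - 1)) := (Nat.card_congr φ).symm

/-- if `G` is a finite non-abelian `p`-group, `n ≥ 2`,
`γ_n(G) = Z(G)` and `Aut_c^{n-1}(G)` is isomorphic as a group to
`Hom(G/Z(G), γ_n(G))` (with pointwise multiplication), then
`Aut_c^{n-1}(G) = Autcent(G)`. -/
theorem statement11 {p : ℕ} (hp : p.Prime) {G : Type u} [Group G] [Finite G]
    (hpG : IsPGroup p G) (hna : ¬ ∀ a b : G, a * b = b * a)
    (n : ℕ) (hn : 2 ≤ n)
    (hγZ : (⊤ : Subgroup G).lowerCentralSeries (n - 1) = Subgroup.center G)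
    (hiso : ∃ φ : (autC G (n - 1)) ≃
        ((G ⧸ Subgroup.center G) →* ((⊤ : Subgroup G).lowerCentralSeries (n - 1))),
      ∀ (f₁ f₂ : autC G (n - 1)) (x : G ⧸ Subgroup.center G),
        φ (f₁ * f₂) x = φ f₁ x * φ f₂ x) :
    autC G (n - 1) = autM (Subgroup.center G) :=
  statement11_general n hn hγZ hiso
end
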